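/- arXiv:1612.06143 — 3 statements merged into one kernel-verified Lean document; each statement's English description precedes it below -/
import Mathlib

section
/- Let I be an abelian ideal of Φ⁺, and let {β₁, β₂}, {γ₁, γ₂} be crossing pairs contained in I with β₁ ≠ β₂. Then either β₁ < γ₁, γ₂ < β₂ (after possibly swapping β₁, β₂), or γ₁ < β₁, β₂ < γ₂ (after possibly swapping γ₁, γ₂); that is, one of the two pairs consists of the minimum and the maximum of {β₁, β₂, γ₁, γ₂} with respect to the standard partial order on roots. -/
local notation "⟪" x ", " y "⟫" => @inner ℝ _ _ x y

/-- A finite (crystallographic) root system in a real inner product space. -/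
structure CrystRS (E : Type) [NormedAddCommGroup E] [InnerProductSpace ℝ E] where
  roots : Set E
  finite : roots.Finite
  nonzero : ∀ β ∈ roots, β ≠ (0 : E)
  neg_mem : ∀ β ∈ roots, -β ∈ roots
  cartan : ∀ β ∈ roots, ∀ γ ∈ roots, ∃ n : ℤ, 2 * ⟪β, γ⟫ = (n : ℝ) * ⟪γ, γ⟫
  reflect : ∀ β ∈ roots, ∀ γ ∈ roots, β - (2 * ⟪β, γ⟫ / ⟪γ, γ⟫) • γ ∈ roots

namespace CrystRS

variable {E : Type} [NormedAddCommGroup E] [InnerProductSpace ℝ E]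

/-- Irreducibility: the set of roots admits no nontrivial orthogonal decomposition. -/
def Irred (R : CrystRS E) : Prop :=
  ∀ A B : Set E, R.roots = A ∪ B → (∀ a ∈ A, ∀ b ∈ B, ⟪a, b⟫ = 0) → A = ∅ ∨ B = ∅

end CrystRS

/-- A root system equipped with a system of simple roots (hence a positive system). -/
structure BasedRS (E : Type) [NormedAddCommGroup E] [InnerProductSpace ℝ E]
    extends CrystRS E where
  simple : Finset E
  simple_sub : (simple : Set E) ⊆ roots
  simple_indep : LinearIndependent ℝ (fun α : {x // x ∈ simple} => (α : E))
  decomp : ∀ β ∈ roots,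
    β ∈ AddSubmonoid.closure (simple : Set E) ∨ -β ∈ AddSubmonoid.closure (simple : Set E)

/-- `γ - β` is a nonnegative integer combination of elements of `P`. -/
def leRel {E : Type} [NormedAddCommGroup E] [InnerProductSpace ℝ E]
    (P : Set E) (β γ : E) : Prop := γ - β ∈ AddSubmonoid.closure P

/-- The indecomposable elements of `P` (the simple roots of a positive system `P`). -/
def SimpleOf {E : Type} [NormedAddCommGroup E] [InnerProductSpace ℝ E]
    (P : Set E) : Set E := {β ∈ P | ∀ γ ∈ P, ∀ δ ∈ P, β ≠ γ + δ}

/-- `C` is an irreducible component of `Ψ`: nonempty, orthogonal to the rest of `Ψ`,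
and admitting no further nontrivial orthogonal decomposition. -/
def IsComponent {E : Type} [NormedAddCommGroup E] [InnerProductSpace ℝ E]
    (Ψ C : Set E) : Prop :=
  C ⊆ Ψ ∧ C.Nonempty ∧ (∀ a ∈ C, ∀ b ∈ Ψ \ C, ⟪a, b⟫ = 0) ∧
    ∀ A B : Set E, C = A ∪ B → (∀ a ∈ A, ∀ b ∈ B, ⟪a, b⟫ = 0) → A = ∅ ∨ B = ∅

namespace BasedRS

variable {E : Type} [NormedAddCommGroup E] [InnerProductSpace ℝ E] (R : BasedRS E)

/-- The positive roots: roots that are nonnegative integer combinations of simple roots. -/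
def pos : Set E := {β ∈ R.roots | β ∈ AddSubmonoid.closure (R.simple : Set E)}

/-- The standard partial order: `γ - β` is a nonnegative integer combination of
simple roots. -/
def le (β γ : E) : Prop := γ - β ∈ AddSubmonoid.closure (R.simple : Set E)

def lt (β γ : E) : Prop := R.le β γ ∧ β ≠ γ

/-- An abelian ideal of the positive system: upward closed, and no two of its
elements sum to a root. -/
def IsAbelianIdeal (I : Set E) : Prop :=
  I ⊆ R.pos ∧ (∀ β ∈ I, ∀ γ ∈ R.pos, R.le β γ → γ ∈ I) ∧
    ∀ β ∈ I, ∀ γ ∈ I, β + γ ∉ R.roots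

/-- A short root: of minimal length among the roots. -/
def IsShort (β : E) : Prop := β ∈ R.roots ∧ ∀ γ ∈ R.roots, ‖β‖ ≤ ‖γ‖

/-- A long root: of maximal length among the roots. -/
def IsLong (β : E) : Prop := β ∈ R.roots ∧ ∀ γ ∈ R.roots, ‖γ‖ ≤ ‖β‖

/-- `θ` is the highest root. -/
def IsHighest (θ : E) : Prop := θ ∈ R.pos ∧ ∀ β ∈ R.roots, R.le β θ

/-- The coefficient of the simple root `α` in `β` equals `1`. -/
def coeffOne (α β : E) : Prop :=
  β - α ∈ Submodule.span ℤ ((R.simple : Set E) \ {α})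

end BasedRS

/-!
Elements of an abelian ideal pairwise have nonnegative inner product, since otherwise their sum
would be a root. Put `δ = β₁ - γ₁ = γ₂ - β₂` and `ε = β₂ - γ₁ = γ₂ - β₁`. Expanding
`0 < ‖ε‖² = ⟪γ₂ - β₁, β₂ - γ₁⟫` shows that `⟪β₁, γ₁⟫ > 0` or `⟪β₂, γ₂⟫ > 0`, so `δ` is a root;
symmetrically `ε` is a root. The signs of `δ` and `ε` then decide which pair consists of the
minimum and the maximum.
-/

lemma AddSubmonoid.eq_zero_or_one_le_of_mem_closure {M : Type*} [AddCommMonoid M]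
    (f : M →+ ℝ) {s : Set M} (hf : ∀ α ∈ s, f α = 1) {x : M}
    (hx : x ∈ AddSubmonoid.closure s) : x = 0 ∨ 1 ≤ f x := by
  induction hx using AddSubmonoid.closure_induction with
  | mem α hα => exact Or.inr (hf α hα).ge
  | zero => exact Or.inl rfl
  | add x y _ _ ihx ihy =>
    rcases ihx with rfl | ihx
    · simpa using ihy
    rcases ihy with rfl | ihy
    · simpa using Or.inr ihx
    · exact Or.inr (by rw [map_add]; linarith)

lemma LinearIndepOn.exists_linearMap_eq_one {K V : Type*} [DivisionRing K] [AddCommGroup V]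
    [Module K V] {s : Set V} (hs : LinearIndepOn K id s) :
    ∃ f : V →ₗ[K] K, ∀ α ∈ s, f α = 1 := by
  refine ⟨(Module.Basis.extend hs).sumCoords, fun α hα => ?_⟩
  have hmem : α ∈ hs.extend (Set.subset_univ _) := hs.subset_extend _ hα
  have hself : Module.Basis.extend hs ⟨α, hmem⟩ = α := Module.Basis.extend_apply_self hs _
  rw [← hself]
  exact Module.Basis.sumCoords_self_apply _ _

namespace CrystRS

variable {E : Type} [NormedAddCommGroup E] [InnerProductSpace ℝ E] (R : CrystRS E)

lemma two_inner_eq_or_le_of_inner_pos {β γ : E} (hβ : β ∈ R.roots) (hγ : γ ∈ R.roots)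
    (hpos : 0 < ⟪β, γ⟫) : 2 * ⟪β, γ⟫ = ⟪γ, γ⟫ ∨ 2 * ⟪γ, γ⟫ ≤ 2 * ⟪β, γ⟫ := by
  obtain ⟨n, hn⟩ := R.cartan β hβ γ hγ
  have hγγ : 0 < ⟪γ, γ⟫ := real_inner_self_pos.2 (R.nonzero γ hγ)
  have hn_pos : (0 : ℝ) < n := pos_of_mul_pos_left (hn ▸ (by positivity)) hγγ.le
  rcases (show n = 1 ∨ 2 ≤ n by norm_cast at hn_pos; omega) with rfl | hn2
  · left
    simpa using hn
  · right
    have : (2 : ℝ) ≤ n := by exact_mod_cast hn2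
    rw [hn]
    nlinarith

lemma sub_mem_roots_of_two_inner_eq {β γ : E} (hβ : β ∈ R.roots) (hγ : γ ∈ R.roots)
    (h : 2 * ⟪β, γ⟫ = ⟪γ, γ⟫) : β - γ ∈ R.roots := by
  have hγγ : ⟪γ, γ⟫ ≠ 0 := (real_inner_self_pos.2 (R.nonzero γ hγ)).ne'
  simpa only [h, div_self hγγ, one_smul] using R.reflect β hβ γ hγ

/-- A Cartan integer equal to `1` yields `β - γ` by a reflection; if both are at least `2`,
then `‖β - γ‖² ≤ 0`. -/
lemma sub_mem_roots_of_inner_pos {β γ : E} (hβ : β ∈ R.roots) (hγ : γ ∈ R.roots)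
    (hne : β ≠ γ) (hpos : 0 < ⟪β, γ⟫) : β - γ ∈ R.roots := by
  rcases R.two_inner_eq_or_le_of_inner_pos hβ hγ hpos with h | hγle
  · exact R.sub_mem_roots_of_two_inner_eq hβ hγ h
  rcases R.two_inner_eq_or_le_of_inner_pos hγ hβ (real_inner_comm β γ ▸ hpos) with h | hβle
  · simpa using R.neg_mem _ (R.sub_mem_roots_of_two_inner_eq hγ hβ h)
  · have hsub : 0 < ⟪β - γ, β - γ⟫ := real_inner_self_pos.2 (sub_ne_zero.2 hne)
    rw [real_inner_sub_sub_self] at hsub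
    linarith [real_inner_comm β γ]

lemma add_mem_roots_of_inner_neg {β γ : E} (hβ : β ∈ R.roots) (hγ : γ ∈ R.roots)
    (hne : β ≠ -γ) (hneg : ⟪β, γ⟫ < 0) : β + γ ∈ R.roots := by
  simpa using R.sub_mem_roots_of_inner_pos hβ (R.neg_mem γ hγ) hne
    (by rw [inner_neg_right]; linarith)

end CrystRS

namespace BasedRS

variable {E : Type} [NormedAddCommGroup E] [InnerProductSpace ℝ E] (R : BasedRS E)

lemma ne_neg_of_mem_pos {β γ : E} (hβ : β ∈ R.pos) (hγ : γ ∈ R.pos) : β ≠ -γ := by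
  obtain ⟨f, hf⟩ := LinearIndepOn.exists_linearMap_eq_one (K := ℝ) R.simple_indep
  have one_le {x : E} (hx : x ∈ R.pos) : 1 ≤ f x :=
    (AddSubmonoid.eq_zero_or_one_le_of_mem_closure f.toAddMonoidHom hf hx.2).resolve_left
      (R.nonzero x hx.1)
  rintro rfl
  have := one_le hβ
  rw [map_neg] at this
  linarith [one_le hγ]

lemma inner_nonneg_of_isAbelianIdeal {I : Set E} (hI : R.IsAbelianIdeal I)
    {β γ : E} (hβ : β ∈ I) (hγ : γ ∈ I) : 0 ≤ ⟪β, γ⟫ := by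
  by_contra! hneg
  exact hI.2.2 β hβ γ hγ <| R.add_mem_roots_of_inner_neg (hI.1 hβ).1 (hI.1 hγ).1
    (R.ne_neg_of_mem_pos (hI.1 hβ) (hI.1 hγ)) hneg

lemma sub_mem_roots_of_add_eq_add {I : Set E} (hI : R.IsAbelianIdeal I) {a b c d : E}
    (ha : a ∈ I) (hb : b ∈ I) (hc : c ∈ I) (hd : d ∈ I) (hsum : a + b = c + d)
    (hac : a ≠ c) (had : a ≠ d) : a - c ∈ R.roots := by
  have hdb : d - a = b - c := sub_eq_sub_iff_add_eq_add.2 (by rw [add_comm, ← hsum, add_comm])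
  have hsq : 0 < ⟪d - a, b - c⟫ := hdb ▸ real_inner_self_pos.2 (sub_ne_zero.2 had.symm)
  simp only [inner_sub_left, inner_sub_right] at hsq
  have := R.inner_nonneg_of_isAbelianIdeal hI hd hc
  have := R.inner_nonneg_of_isAbelianIdeal hI ha hb
  by_cases hpos : 0 < ⟪a, c⟫
  · exact R.sub_mem_roots_of_inner_pos (hI.1 ha).1 (hI.1 hc).1 hac hpos
  · have hbd : 0 < ⟪b, d⟫ := by rw [real_inner_comm d b]; linarith
    have hbd_ne : b ≠ d := fun h => hac (by rw [h] at hsum; exact add_right_cancel hsum)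
    have hroot := R.neg_mem _ (R.sub_mem_roots_of_inner_pos (hI.1 hb).1 (hI.1 hd).1 hbd_ne hbd)
    rwa [neg_sub, ← sub_eq_sub_iff_add_eq_add.2 (hsum.trans (add_comm c d))] at hroot

lemma le_or_le_of_sub_mem_roots {x y : E} (h : x - y ∈ R.roots) : R.le y x ∨ R.le x y := by
  simpa [le] using R.decomp _ h

lemma le_iff_le_of_add_eq_add {a b c d : E} (hsum : a + b = c + d) : R.le c a ↔ R.le b d := by
  rw [le, le, sub_eq_sub_iff_add_eq_add.2 (hsum.trans (add_comm c d))]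

end BasedRS

theorem statement7_general {E : Type} [NormedAddCommGroup E] [InnerProductSpace ℝ E] (R : BasedRS E)
    (I : Set E) (hI : R.IsAbelianIdeal I)
    (β₁ β₂ γ₁ γ₂ : E)
    (hb1 : β₁ ∈ I) (hb2 : β₂ ∈ I) (hg1 : γ₁ ∈ I) (hg2 : γ₂ ∈ I)
    (hsum : β₁ + β₂ = γ₁ + γ₂)
    (h11 : β₁ ≠ γ₁) (h12 : β₁ ≠ γ₂) (h21 : β₂ ≠ γ₁) (h22 : β₂ ≠ γ₂) :
    (R.lt β₁ γ₁ ∧ R.lt β₁ γ₂ ∧ R.lt γ₁ β₂ ∧ R.lt γ₂ β₂) ∨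
    (R.lt β₂ γ₁ ∧ R.lt β₂ γ₂ ∧ R.lt γ₁ β₁ ∧ R.lt γ₂ β₁) ∨
    (R.lt γ₁ β₁ ∧ R.lt γ₁ β₂ ∧ R.lt β₁ γ₂ ∧ R.lt β₂ γ₂) ∨
    (R.lt γ₂ β₁ ∧ R.lt γ₂ β₂ ∧ R.lt β₁ γ₁ ∧ R.lt β₂ γ₁) := by
  have hsum' : β₂ + β₁ = γ₁ + γ₂ := (add_comm β₂ β₁).trans hsum
  have hδ := R.le_or_le_of_sub_mem_roots
    (R.sub_mem_roots_of_add_eq_add hI hb1 hb2 hg1 hg2 hsum h11 h12)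
  have hε := R.le_or_le_of_sub_mem_roots
    (R.sub_mem_roots_of_add_eq_add hI hb2 hb1 hg1 hg2 hsum' h21 h22)
  have t₁ := R.le_iff_le_of_add_eq_add hsum
  have t₂ := R.le_iff_le_of_add_eq_add hsum.symm
  have t₃ := R.le_iff_le_of_add_eq_add hsum'
  have t₄ := R.le_iff_le_of_add_eq_add hsum'.symm
  simp only [BasedRS.lt]
  rcases hδ with hδ | hδ <;> rcases hε with hε | hε
  · exact .inr <| .inr <| .inl ⟨⟨hδ, h11.symm⟩, ⟨hε, h21.symm⟩, ⟨t₃.1 hε, h12⟩, ⟨t₁.1 hδ, h22⟩⟩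
  · exact .inr <| .inl ⟨⟨hε, h21⟩, ⟨t₁.1 hδ, h22⟩, ⟨hδ, h11.symm⟩, ⟨t₄.1 hε, h12.symm⟩⟩
  · exact .inl ⟨⟨hδ, h11⟩, ⟨t₃.1 hε, h12⟩, ⟨hε, h21.symm⟩, ⟨t₂.1 hδ, h22.symm⟩⟩
  · exact .inr <| .inr <| .inr ⟨⟨t₄.1 hε, h12.symm⟩, ⟨t₂.1 hδ, h22.symm⟩, ⟨hδ, h11⟩, ⟨hε, h21⟩⟩

theorem statement7 {E : Type} [NormedAddCommGroup E] [InnerProductSpace ℝ E] (R : BasedRS E) (hirr : R.toCrystRS.Irred)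
    (I : Set E) (hI : R.IsAbelianIdeal I)
    (β₁ β₂ γ₁ γ₂ : E)
    (hb1 : β₁ ∈ I) (hb2 : β₂ ∈ I) (hg1 : γ₁ ∈ I) (hg2 : γ₂ ∈ I)
    (hne : β₁ ≠ β₂) (hsum : β₁ + β₂ = γ₁ + γ₂)
    (h11 : β₁ ≠ γ₁) (h12 : β₁ ≠ γ₂) (h21 : β₂ ≠ γ₁) (h22 : β₂ ≠ γ₂) :
    (R.lt β₁ γ₁ ∧ R.lt β₁ γ₂ ∧ R.lt γ₁ β₂ ∧ R.lt γ₂ β₂) ∨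
    (R.lt β₂ γ₁ ∧ R.lt β₂ γ₂ ∧ R.lt γ₁ β₁ ∧ R.lt γ₂ β₁) ∨
    (R.lt γ₁ β₁ ∧ R.lt γ₁ β₂ ∧ R.lt β₁ γ₂ ∧ R.lt β₂ γ₂) ∨
    (R.lt γ₂ β₁ ∧ R.lt γ₂ β₂ ∧ R.lt β₁ γ₁ ∧ R.lt β₂ γ₁) :=
  statement7_general R I hI β₁ β₂ γ₁ γ₂ hb1 hb2 hg1 hg2 hsum h11 h12 h21 h22
end

section
/- Let I be an abelian ideal of Φ⁺ and let {β₁, β₂}, {γ₁, γ₂} be crossing pairs in I with β₁ < γ₁, γ₂ < β₂. If x := β₂ - γ₁ is a long root, then y := β₂ - γ₂, β₁, β₂, γ₁, γ₂ are all long roots. -/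
local notation "⟪" x ", " y "⟫" => @inner ℝ _ _ x y

/-!
For a long root `x` and a root `d ≠ ±x`, the Cartan integer `2⟪d, x⟫ / ‖x‖²` lies in
`{-1, 0, 1}`, because `‖d ∓ x‖² > 0`. If `a, b ∈ I` and `x = b - a` is long, the Cartan integers of
`a` and `b = a + x` against `x` differ by `2`, so `2⟪a, x⟫ = -‖x‖²`; the Cartan integer of `x`
against `a` is then `-1` (it cannot be `-2`, as the reflection `x + 2a = a + b` is not a root), so
`‖a‖ = ‖b‖ = ‖x‖`. For the crossing pairs this gives `2⟪γ₁, β₁⟫ = (1 + k)‖x‖²`, where `k ≥ 0` is the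
Cartan integer of `β₂` against `β₁` (nonnegative because `β₁ + β₂` is not a root). Hence
`‖γ₁ - β₁‖² = (1 - k)‖x‖² > 0` forces `k = 0`, and `y = γ₁ - β₁` has the length of `x`.
-/

section InnerProduct

variable {E : Type} [NormedAddCommGroup E] [InnerProductSpace ℝ E]

theorem cartan_mul_cartan_le_four {a b : E} {p q : ℤ} (ha : 0 < ⟪a, a⟫) (hb : 0 < ⟪b, b⟫)
    (hp : 2 * ⟪a, b⟫ = p * ⟪b, b⟫) (hq : 2 * ⟪b, a⟫ = q * ⟪a, a⟫) : p * q ≤ 4 := by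
  rw [real_inner_comm] at hq
  have hcs := real_inner_mul_inner_self_le a b
  have h : ((p * q : ℤ) : ℝ) * (⟪a, a⟫ * ⟪b, b⟫) ≤ 4 * (⟪a, a⟫ * ⟪b, b⟫) := by
    have hpq : (p : ℝ) * q * (⟪a, a⟫ * ⟪b, b⟫) = 4 * (⟪a, b⟫ * ⟪a, b⟫) := by
      linear_combination (-(q : ℝ) * ⟪a, a⟫) * hp - 2 * ⟪a, b⟫ * hq
    push_cast
    linarith
  exact_mod_cast le_of_mul_le_mul_right h (mul_pos ha hb)

theorem cartan_lt_two_of_inner_self_le {d x : E} {n : ℤ} (hle : ⟪d, d⟫ ≤ ⟪x, x⟫) (hne : d ≠ x)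
    (hn : 2 * ⟪d, x⟫ = n * ⟪x, x⟫) : n < 2 := by
  have hpos : 0 < ⟪d - x, d - x⟫ := real_inner_self_pos.mpr (sub_ne_zero.mpr hne)
  rw [real_inner_sub_sub_self] at hpos
  have h : (n : ℝ) < 2 := by nlinarith [real_inner_self_nonneg (x := x)]
  exact_mod_cast h

end InnerProduct

namespace CrystRS

variable {E : Type} [NormedAddCommGroup E] [InnerProductSpace ℝ E] (R : CrystRS E)

theorem inner_self_pos {a : E} (ha : a ∈ R.roots) : 0 < ⟪a, a⟫ :=
  real_inner_self_pos.mpr (R.nonzero a ha)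

theorem sub_intCast_smul_mem {a b : E} (ha : a ∈ R.roots) (hb : b ∈ R.roots) {p : ℤ}
    (hp : 2 * ⟪a, b⟫ = p * ⟪b, b⟫) : a - (p : ℝ) • b ∈ R.roots := by
  have h := R.reflect a ha b hb
  rwa [hp, mul_div_cancel_right₀ _ (R.inner_self_pos hb).ne'] at h

theorem add_mem_of_inner_neg {a b : E} (ha : a ∈ R.roots) (hb : b ∈ R.roots)
    (hab : ⟪a, b⟫ < 0) (hne : a + b ≠ 0) : a + b ∈ R.roots := by
  obtain ⟨p, hp⟩ := R.cartan a ha b hb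
  obtain ⟨q, hq⟩ := R.cartan b hb a ha
  have haa := R.inner_self_pos ha
  have hbb := R.inner_self_pos hb
  have hpq := cartan_mul_cartan_le_four haa hbb hp hq
  rw [real_inner_comm] at hq
  have hp0 : p < 0 := by
    have : (p : ℝ) < 0 := by nlinarith
    exact_mod_cast this
  have hq0 : q < 0 := by
    have : (q : ℝ) < 0 := by nlinarith
    exact_mod_cast this
  have hcases : p = -1 ∨ q = -1 ∨ (p = -2 ∧ q = -2) := by
    have : -4 ≤ p := by nlinarith
    have : -4 ≤ q := by nlinarith
    interval_cases p <;> interval_cases q <;> omega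
  rcases hcases with rfl | rfl | ⟨rfl, rfl⟩
  · simpa using R.sub_intCast_smul_mem ha hb hp
  · have h := R.sub_intCast_smul_mem hb ha (p := -1) (by rwa [real_inner_comm a b])
    rwa [Int.cast_neg, Int.cast_one, neg_one_smul ℝ, sub_neg_eq_add, add_comm] at h
  · -- `a` and `b` have equal length and pair to `-‖a‖²`, so `a + b` has length zero
    refine absurd (inner_self_eq_zero (𝕜 := ℝ) |>.mp ?_) hne
    rw [real_inner_add_add_self]
    push_cast at hp hq
    linarith

theorem sub_mem_of_inner_pos {a b : E} (ha : a ∈ R.roots) (hb : b ∈ R.roots)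
    (hab : 0 < ⟪a, b⟫) (hne : a ≠ b) : a - b ∈ R.roots := by
  rw [sub_eq_add_neg]
  refine R.add_mem_of_inner_neg ha (R.neg_mem b hb) (by rwa [inner_neg_right, neg_lt_zero]) ?_
  rwa [← sub_eq_add_neg, sub_ne_zero]

end CrystRS

namespace BasedRS

variable {E : Type} [NormedAddCommGroup E] [InnerProductSpace ℝ E] {R : BasedRS E}

theorem IsLong.inner_self_le {x d : E} (hx : R.IsLong x) (hd : d ∈ R.roots) :
    ⟪d, d⟫ ≤ ⟪x, x⟫ := by
  rw [real_inner_self_eq_norm_sq, real_inner_self_eq_norm_sq]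
  exact pow_le_pow_left₀ (norm_nonneg d) (hx.2 d hd) 2

theorem IsLong.of_inner_self_eq {x z : E} (hx : R.IsLong x) (hz : z ∈ R.roots)
    (h : ⟪z, z⟫ = ⟪x, x⟫) : R.IsLong z := by
  rw [real_inner_self_eq_norm_sq, real_inner_self_eq_norm_sq] at h
  have hnorm : ‖z‖ = ‖x‖ := (sq_eq_sq₀ (norm_nonneg z) (norm_nonneg x)).mp h
  exact ⟨hz, fun γ hγ => hnorm ▸ hx.2 γ hγ⟩

theorem IsLong.cartan_mem_Icc {x d : E} (hx : R.IsLong x) (hd : d ∈ R.roots) (h₁ : d ≠ x)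
    (h₂ : d ≠ -x) {n : ℤ} (hn : 2 * ⟪d, x⟫ = n * ⟪x, x⟫) : -1 ≤ n ∧ n ≤ 1 := by
  have hup := cartan_lt_two_of_inner_self_le (hx.inner_self_le hd) h₁ hn
  have hlow := cartan_lt_two_of_inner_self_le (d := -d) (n := -n)
    (by rw [inner_neg_neg]; exact hx.inner_self_le hd) (fun h => h₂ (neg_eq_iff_eq_neg.mp h))
    (by push_cast; rw [inner_neg_left]; linarith)
  omega

namespace IsAbelianIdeal

variable {I : Set E}

theorem mem_roots (hI : R.IsAbelianIdeal I) {a : E} (ha : a ∈ I) : a ∈ R.roots :=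
  (hI.1 ha).1

theorem inner_nonneg (hI : R.IsAbelianIdeal I) {a b : E} (ha : a ∈ I) (hb : b ∈ I)
    (hne : a + b ≠ 0) : 0 ≤ ⟪a, b⟫ :=
  not_lt.mp fun h =>
    hI.2.2 a ha b hb (R.add_mem_of_inner_neg (hI.mem_roots ha) (hI.mem_roots hb) h hne)

theorem two_inner_sub_eq_neg (hI : R.IsAbelianIdeal I) {a b : E} (ha : a ∈ I) (hb : b ∈ I)
    (hx : R.IsLong (b - a)) : 2 * ⟪a, b - a⟫ = -⟪b - a, b - a⟫ := by
  have har := hI.mem_roots ha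
  have hbr := hI.mem_roots hb
  obtain ⟨n, hn⟩ := R.cartan a har (b - a) hx.1
  have hbn : 2 * ⟪b, b - a⟫ = ((n + 2 : ℤ) : ℝ) * ⟪b - a, b - a⟫ := by
    rw [show ⟪b, b - a⟫ = ⟪a, b - a⟫ + ⟪b - a, b - a⟫ by rw [← inner_add_left, add_sub_cancel]]
    push_cast
    linarith
  have hna := hx.cartan_mem_Icc har
    (fun h => hI.2.2 a ha a ha (by rwa [show a + a = b by linear_combination (norm := module) h]))
    (fun h => R.nonzero b hbr (by linear_combination (norm := module) h)) hn
  have hnb := hx.cartan_mem_Icc hbr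
    (fun h => R.nonzero a har (by linear_combination (norm := module) h))
    (fun h => hI.2.2 b hb b hb (by rwa [show b + b = a by linear_combination (norm := module) h]))
    hbn
  obtain rfl : n = -1 := by omega
  push_cast at hn
  linarith

theorem inner_self_eq_of_isLong_sub (hI : R.IsAbelianIdeal I) {a b : E} (ha : a ∈ I)
    (hb : b ∈ I) (hx : R.IsLong (b - a)) : ⟪a, a⟫ = ⟪b - a, b - a⟫ := by
  have har := hI.mem_roots ha
  have haa := R.inner_self_pos har
  have hax := hI.two_inner_sub_eq_neg ha hb hx
  have hle := hx.inner_self_le har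
  have hab : 0 ≤ ⟪a, b⟫ := hI.inner_nonneg ha hb fun h =>
    hI.2.2 a ha a ha (by rw [show a + a = -(b - a) by linear_combination (norm := module) h]
                         exact R.neg_mem _ hx.1)
  have hab' : ⟪a, b⟫ = ⟪a, a⟫ + ⟪a, b - a⟫ := by rw [← inner_add_right, add_sub_cancel]
  obtain ⟨m, hm⟩ := R.cartan (b - a) hx.1 a har
  rw [real_inner_comm] at hm
  have hm1 : (m : ℝ) ≤ -1 := by nlinarith
  have hm2 : (-2 : ℝ) ≤ m := by nlinarith
  obtain rfl | rfl : m = -1 ∨ m = -2 := by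
    have : m ≤ -1 := by exact_mod_cast hm1
    have : -2 ≤ m := by exact_mod_cast hm2
    omega
  · push_cast at hm
    linarith
  · -- reflecting `b - a` in `a` gives `a + b`
    refine absurd (R.sub_intCast_smul_mem hx.1 har (by rwa [real_inner_comm])) ?_
    rw [show b - a - ((-2 : ℤ) : ℝ) • a = a + b by push_cast; module]
    exact hI.2.2 a ha b hb

theorem isLong_of_isLong_sub (hI : R.IsAbelianIdeal I) {a b : E} (ha : a ∈ I) (hb : b ∈ I)
    (hx : R.IsLong (b - a)) : R.IsLong a ∧ R.IsLong b := by
  have haa := hI.inner_self_eq_of_isLong_sub ha hb hx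
  have hax := hI.two_inner_sub_eq_neg ha hb hx
  have hbb : ⟪b, b⟫ = ⟪b - a, b - a⟫ := by
    rw [← add_sub_cancel a b, real_inner_add_add_self, add_sub_cancel]
    linarith
  exact ⟨hx.of_inner_self_eq (hI.mem_roots ha) haa, hx.of_inner_self_eq (hI.mem_roots hb) hbb⟩

theorem isLong_sub_of_crossing (hI : R.IsAbelianIdeal I) {β₁ β₂ γ₁ γ₂ : E} (hb1 : β₁ ∈ I)
    (hb2 : β₂ ∈ I) (hg1 : γ₁ ∈ I) (hg2 : γ₂ ∈ I) (hsum : β₁ + β₂ = γ₁ + γ₂) (hne : β₁ ≠ γ₁)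
    (hx : R.IsLong (β₂ - γ₁)) : R.IsLong (β₂ - γ₂) := by
  have hxγ : γ₂ - β₁ = β₂ - γ₁ := by linear_combination (norm := module) -hsum
  have hx' : R.IsLong (γ₂ - β₁) := hxγ ▸ hx
  set L := ⟪β₂ - γ₁, β₂ - γ₁⟫ with hL
  have hLpos : 0 < L := R.inner_self_pos hx.1
  have hβ₁ : ⟪β₁, β₁⟫ = L := by
    rw [hL, ← hxγ]
    exact hI.inner_self_eq_of_isLong_sub hb1 hg2 hx'
  have hβ₁x : 2 * ⟪β₁, γ₂ - β₁⟫ = -L := by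
    rw [hL, ← hxγ]
    exact hI.two_inner_sub_eq_neg hb1 hg2 hx'
  have hγ₁ : ⟪γ₁, γ₁⟫ = L := hI.inner_self_eq_of_isLong_sub hg1 hb2 hx
  obtain ⟨k, hk⟩ := R.cartan β₂ (hI.mem_roots hb2) β₁ (hI.mem_roots hb1)
  rw [hβ₁] at hk
  have hk0 : (0 : ℝ) ≤ k := by
    -- if `β₂ + β₁ = 0`, then `β₂ + γ₂` is the root `γ₂ - β₁`
    have := hI.inner_nonneg hb2 hb1 fun h =>
      hI.2.2 β₂ hb2 γ₂ hg2 (by rw [show β₂ + γ₂ = γ₂ - β₁ by linear_combination (norm := module) h]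
                               exact hx'.1)
    nlinarith
  have hγ₁β₁ : 2 * ⟪γ₁, β₁⟫ = (1 + k) * L := by
    rw [show γ₁ = β₂ - (γ₂ - β₁) by linear_combination (norm := module) -hsum, inner_sub_left,
      real_inner_comm β₁ (γ₂ - β₁)]
    linarith
  have hy : ⟪γ₁ - β₁, γ₁ - β₁⟫ = (1 - k) * L := by
    rw [real_inner_sub_sub_self]
    linarith
  have hk : k = 0 := by
    have hypos : 0 < ⟪γ₁ - β₁, γ₁ - β₁⟫ := real_inner_self_pos.mpr (sub_ne_zero.mpr hne.symm)
    have : (k : ℝ) < 1 := by nlinarith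
    have : k < 1 := by exact_mod_cast this
    have : 0 ≤ k := by exact_mod_cast hk0
    omega
  subst hk
  have hyroot : γ₁ - β₁ ∈ R.roots :=
    R.sub_mem_of_inner_pos (hI.mem_roots hg1) (hI.mem_roots hb1) (by push_cast at hγ₁β₁; linarith)
      hne.symm
  rw [show β₂ - γ₂ = γ₁ - β₁ by linear_combination (norm := module) hsum]
  exact hx.of_inner_self_eq hyroot (by push_cast at hy; linarith)

end IsAbelianIdeal

end BasedRS

theorem statement9_general {E : Type} [NormedAddCommGroup E] [InnerProductSpace ℝ E] (R : BasedRS E)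
    (I : Set E) (hI : R.IsAbelianIdeal I)
    (β₁ β₂ γ₁ γ₂ : E)
    (hb1 : β₁ ∈ I) (hb2 : β₂ ∈ I) (hg1 : γ₁ ∈ I) (hg2 : γ₂ ∈ I)
    (hsum : β₁ + β₂ = γ₁ + γ₂)
    (hlt1 : R.lt β₁ γ₁)
    (hx : R.IsLong (β₂ - γ₁)) :
    R.IsLong (β₂ - γ₂) ∧ R.IsLong β₁ ∧ R.IsLong β₂ ∧ R.IsLong γ₁ ∧ R.IsLong γ₂ := by
  have hx' : R.IsLong (γ₂ - β₁) := by
    rwa [show γ₂ - β₁ = β₂ - γ₁ by linear_combination (norm := module) -hsum]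
  obtain ⟨hγ₁, hβ₂⟩ := hI.isLong_of_isLong_sub hg1 hb2 hx
  obtain ⟨hβ₁, hγ₂⟩ := hI.isLong_of_isLong_sub hb1 hg2 hx'
  exact ⟨hI.isLong_sub_of_crossing hb1 hb2 hg1 hg2 hsum hlt1.2 hx, hβ₁, hβ₂, hγ₁, hγ₂⟩

theorem statement9 {E : Type} [NormedAddCommGroup E] [InnerProductSpace ℝ E] (R : BasedRS E) (hirr : R.toCrystRS.Irred)
    (I : Set E) (hI : R.IsAbelianIdeal I)
    (β₁ β₂ γ₁ γ₂ : E)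
    (hb1 : β₁ ∈ I) (hb2 : β₂ ∈ I) (hg1 : γ₁ ∈ I) (hg2 : γ₂ ∈ I)
    (hsum : β₁ + β₂ = γ₁ + γ₂)
    (hlt1 : R.lt β₁ γ₁) (hlt2 : R.lt β₁ γ₂) (hlt3 : R.lt γ₁ β₂) (hlt4 : R.lt γ₂ β₂)
    (hx : R.IsLong (β₂ - γ₁)) :
    R.IsLong (β₂ - γ₂) ∧ R.IsLong β₁ ∧ R.IsLong β₂ ∧ R.IsLong γ₁ ∧ R.IsLong γ₂ :=
  statement9_general R I hI β₁ β₂ γ₁ γ₂ hb1 hb2 hg1 hg2 hsum hlt1 hx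
end

section
/- Let Φ be a finite irreducible crystallographic root system with simple system Π and highest root θ = Σ m_α α. If α ∈ Π satisfies m_α = 1, then the principal ideal I = {β ∈ Φ⁺ : α ≤ β} is a maximal abelian ideal of Φ⁺, and equals {β ∈ Φ⁺ : c_α(β) = 1}, where c_α(β) is the coefficient of α in β. -/
local notation "⟪" x ", " y "⟫" => @inner ℝ _ _ x y

/-!
Let `c` be the linear functional reading off the coefficient of `α`. Every root lies below `θ`
and `c θ = 1`, so `c` takes only the values `0` and `1` on positive roots; hence `α ≤ β` iff
`c β = 1` iff the coefficient of `α` in `β` is `1`, and two elements of `I` cannot sum to a root,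
which would have `c = 2`.

For maximality, let `δ` be an element of maximal height of `J \ I`, for an abelian ideal
`J ⊇ I`; then `c δ = 0`. If `⟪δ, γ⟫ < 0` for a simple root `γ`, then `δ + γ` is a root: it lies
in `J \ I` and is higher than `δ` unless `γ = α`, but `α ∈ I ⊆ J` and `J` is abelian. If `δ` is
dominant, then `⟪θ, δ⟫ ≥ ⟪δ, δ⟫ > 0`, so `θ - δ` is a root; it lies in `I`, and
`δ + (θ - δ) = θ` contradicts abelianness.
-/

theorem LinearIndepOn.exists_dual_apply_eq {K V : Type*} [Field K] [AddCommGroup V] [Module K V]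
    {s : Set V} (hs : LinearIndepOn K id s) (g : V → K) :
    ∃ f : Module.Dual K V, ∀ x ∈ s, f x = g x := by
  let b := Module.Basis.extend hs
  refine ⟨b.constr K fun i => g i, fun x hx => ?_⟩
  have hb : b ⟨x, hs.subset_extend _ hx⟩ = x := Module.Basis.extend_apply_self hs _
  simpa [hb] using b.constr_basis K (fun i => g i) ⟨x, hs.subset_extend _ hx⟩

theorem AddSubmonoid.map_nonneg_of_mem_closure {M N F : Type*} [AddMonoid M] [AddCommMonoid N]
    [PartialOrder N] [IsOrderedAddMonoid N] [FunLike F M N] [AddMonoidHomClass F M N] (f : F)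
    {s : Set M} (hs : ∀ x ∈ s, 0 ≤ f x) {x : M} (hx : x ∈ closure s) : 0 ≤ f x :=
  closure_induction hs (map_zero f).ge
    (fun _ _ _ _ hx hy => (map_add f _ _).symm ▸ add_nonneg hx hy) hx

namespace CrystRS

variable {E : Type} [NormedAddCommGroup E] [InnerProductSpace ℝ E] (R : CrystRS E)

theorem sub_mem_roots_of_inner_pos_s13 {x y : E} (hx : x ∈ R.roots) (hy : y ∈ R.roots)
    (hne : x ≠ y) (hpos : 0 < ⟪x, y⟫) : x - y ∈ R.roots := by
  have hxx : 0 < ⟪x, x⟫ := real_inner_self_pos.2 (R.nonzero x hx)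
  have hyy : 0 < ⟪y, y⟫ := real_inner_self_pos.2 (R.nonzero y hy)
  obtain ⟨n, hn⟩ := R.cartan x hx y hy
  obtain ⟨m, hm⟩ := R.cartan y hy x hx
  rw [real_inner_comm] at hm
  have hn0 : 0 < n := Int.cast_pos.1 (pos_of_mul_pos_left (α := ℝ) (hn ▸ by positivity) hyy.le)
  have hm0 : 0 < m := Int.cast_pos.1 (pos_of_mul_pos_left (α := ℝ) (hm ▸ by positivity) hxx.le)
  rcases (show n = 1 ∨ 2 ≤ n by omega) with rfl | hn2
  · have hcoeff : 2 * ⟪x, y⟫ / ⟪y, y⟫ = 1 := by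
      rw [div_eq_one_iff_eq hyy.ne', hn, Int.cast_one, one_mul]
    simpa only [hcoeff, one_smul] using R.reflect x hx y hy
  rcases (show m = 1 ∨ 2 ≤ m by omega) with rfl | hm2
  · have hcoeff : 2 * ⟪y, x⟫ / ⟪x, x⟫ = 1 := by
      rw [div_eq_one_iff_eq hxx.ne', real_inner_comm, hm, Int.cast_one, one_mul]
    simpa only [hcoeff, one_smul, neg_sub] using R.neg_mem _ (R.reflect y hy x hx)
  -- `n, m ≥ 2` force `⟪x, y⟫ ≥ ‖x‖², ‖y‖²`, hence `‖x - y‖² ≤ 0`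
  have hn2' : (2 : ℝ) ≤ n := by exact_mod_cast hn2
  have hm2' : (2 : ℝ) ≤ m := by exact_mod_cast hm2
  refine absurd (sub_eq_zero.1 (real_inner_self_nonpos.1 ?_)) hne
  rw [inner_sub_sub_self, real_inner_comm x y]
  nlinarith

theorem add_mem_roots_of_inner_neg_s13 {x y : E} (hx : x ∈ R.roots) (hy : y ∈ R.roots)
    (hne : x + y ≠ 0) (hneg : ⟪x, y⟫ < 0) : x + y ∈ R.roots := by
  simpa using R.sub_mem_roots_of_inner_pos_s13 hx (R.neg_mem y hy)
    (fun h => hne (by rw [h, neg_add_cancel])) (by rwa [inner_neg_right, neg_pos])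

end CrystRS

namespace BasedRS

variable {E : Type} [NormedAddCommGroup E] [InnerProductSpace ℝ E] (R : BasedRS E)

theorem le_trans {β γ δ : E} (hβγ : R.le β γ) (hγδ : R.le γ δ) : R.le β δ := by
  simpa only [le, sub_add_sub_cancel] using add_mem hγδ hβγ

theorem simple_linearIndepOn : LinearIndepOn ℝ id (R.simple : Set E) := R.simple_indep

open Classical in
noncomputable def coord (α : E) : Module.Dual ℝ E :=
  (R.simple_linearIndepOn.exists_dual_apply_eq fun γ => if γ = α then 1 else 0).choose

variable {R}

open Classical in
theorem coord_simple (α : E) {γ : E} (hγ : γ ∈ R.simple) :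
    R.coord α γ = if γ = α then 1 else 0 :=
  (R.simple_linearIndepOn.exists_dual_apply_eq _).choose_spec γ hγ

theorem coord_self {α : E} (hα : α ∈ R.simple) : R.coord α α = 1 := by
  simp [coord_simple α hα]

theorem coord_of_ne {α γ : E} (hγ : γ ∈ R.simple) (hγα : γ ≠ α) : R.coord α γ = 0 := by
  simp [coord_simple α hγ, hγα]

theorem coord_nonneg (α : E) {x : E} (hx : x ∈ AddSubmonoid.closure (R.simple : Set E)) :
    0 ≤ R.coord α x :=
  AddSubmonoid.map_nonneg_of_mem_closure _ (fun γ hγ => by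
    rw [coord_simple α hγ]; split_ifs <;> norm_num) hx

theorem coord_eq_zero_of_mem_span {α x : E}
    (hx : x ∈ Submodule.span ℤ ((R.simple : Set E) \ {α})) : R.coord α x = 0 := by
  have hle : Submodule.span ℤ ((R.simple : Set E) \ {α}) ≤
      LinearMap.ker (R.coord α).toAddMonoidHom.toIntLinearMap :=
    Submodule.span_le.2 fun γ hγ => coord_of_ne hγ.1 hγ.2
  exact hle hx

theorem closure_diff_le_span (α : E) :
    AddSubmonoid.closure ((R.simple : Set E) \ {α}) ≤
      (Submodule.span ℤ ((R.simple : Set E) \ {α})).toAddSubmonoid :=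
  AddSubmonoid.closure_le.2 Submodule.subset_span

theorem exists_coord_eq_and_sub_nsmul_mem_closure {α x : E} (hα : α ∈ R.simple)
    (hx : x ∈ AddSubmonoid.closure (R.simple : Set E)) :
    ∃ n : ℕ, R.coord α x = n ∧ x - n • α ∈ AddSubmonoid.closure ((R.simple : Set E) \ {α}) := by
  rw [← Set.insert_sdiff_self_of_mem (Finset.mem_coe.2 hα), Set.insert_eq,
    AddSubmonoid.closure_union, AddSubmonoid.mem_sup] at hx
  obtain ⟨_, hy, z, hz, rfl⟩ := hx
  obtain ⟨n, rfl⟩ := AddSubmonoid.mem_closure_singleton.1 hy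
  refine ⟨n, ?_, by simpa using hz⟩
  rw [map_add, map_nsmul, coord_self hα, coord_eq_zero_of_mem_span (closure_diff_le_span α hz)]
  simp

theorem sub_mem_closure_of_coord_eq_one {α x : E} (hα : α ∈ R.simple)
    (hx : x ∈ AddSubmonoid.closure (R.simple : Set E)) (h : R.coord α x = 1) :
    x - α ∈ AddSubmonoid.closure ((R.simple : Set E) \ {α}) := by
  obtain ⟨n, hn, hxn⟩ := exists_coord_eq_and_sub_nsmul_mem_closure hα hx
  obtain rfl : n = 1 := by exact_mod_cast hn.symm.trans h
  simpa using hxn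

theorem coeffOne_iff {α x : E} (hα : α ∈ R.simple)
    (hx : x ∈ AddSubmonoid.closure (R.simple : Set E)) :
    R.coeffOne α x ↔ R.coord α x = 1 := by
  refine ⟨fun h => ?_, fun h => closure_diff_le_span α (sub_mem_closure_of_coord_eq_one hα hx h)⟩
  have := coord_eq_zero_of_mem_span h
  rwa [map_sub, coord_self hα, sub_eq_zero] at this

theorem coord_le_of_isHighest {θ : E} (hθ : R.IsHighest θ) (α : E) {β : E} (hβ : β ∈ R.roots) :
    R.coord α β ≤ R.coord α θ := by
  simpa using coord_nonneg α (hθ.2 β hβ)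

theorem le_iff_coord_eq_one {θ α β : E} (hθ : R.IsHighest θ) (hα : α ∈ R.simple)
    (hθα : R.coord α θ = 1) (hβ : β ∈ R.pos) : R.le α β ↔ R.coord α β = 1 := by
  refine ⟨fun h => (hθα ▸ coord_le_of_isHighest hθ α hβ.1).antisymm ?_,
    fun h => AddSubmonoid.closure_mono Set.sdiff_subset (sub_mem_closure_of_coord_eq_one hα hβ.2 h)⟩
  have := coord_nonneg α h
  rwa [map_sub, coord_self hα, sub_nonneg] at this

theorem coord_eq_zero_of_not_le {θ α β : E} (hθ : R.IsHighest θ) (hα : α ∈ R.simple)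
    (hθα : R.coord α θ = 1) (hβ : β ∈ R.pos) (h : ¬ R.le α β) : R.coord α β = 0 := by
  obtain ⟨n, hn, -⟩ := exists_coord_eq_and_sub_nsmul_mem_closure hα hβ.2
  have hn1 : n ≤ 1 := by exact_mod_cast hn ▸ hθα ▸ coord_le_of_isHighest hθ α hβ.1
  have hn1' : n ≠ 1 := by
    rintro rfl
    exact h ((le_iff_coord_eq_one hθ hα hθα hβ).2 (by simpa using hn))
  rw [hn, Nat.cast_eq_zero]
  omega

theorem isAbelianIdeal_setOf_le {θ α : E} (hθ : R.IsHighest θ) (hα : α ∈ R.simple)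
    (hθα : R.coord α θ = 1) : R.IsAbelianIdeal {β ∈ R.pos | R.le α β} := by
  refine ⟨fun β hβ => hβ.1, fun β hβ γ hγ hβγ => ⟨hγ, R.le_trans hβ.2 hβγ⟩, ?_⟩
  rintro β ⟨hβ, hαβ⟩ γ ⟨hγ, hαγ⟩ hβγ
  have := coord_le_of_isHighest hθ α hβγ
  rw [map_add, (le_iff_coord_eq_one hθ hα hθα hβ).1 hαβ, (le_iff_coord_eq_one hθ hα hθα hγ).1 hαγ,
    hθα] at this
  norm_num at this

theorem sub_mem_roots_of_dominant {θ δ : E} (hθ : R.IsHighest θ) (hδ : δ ∈ R.roots)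
    (hdom : ∀ γ ∈ R.simple, 0 ≤ ⟪δ, γ⟫) (hne : θ ≠ δ) : θ - δ ∈ R.roots := by
  have h1 : 0 ≤ ⟪δ, θ - δ⟫ :=
    AddSubmonoid.map_nonneg_of_mem_closure (innerₛₗ ℝ δ) hdom (hθ.2 δ hδ)
  have h2 : 0 < ⟪δ, δ⟫ := real_inner_self_pos.2 (R.nonzero δ hδ)
  refine R.sub_mem_roots_of_inner_pos_s13 hθ.1.1 hδ hne ?_
  rw [inner_sub_right] at h1
  rw [real_inner_comm]
  linarith

theorem add_mem_pos_of_inner_neg {δ γ : E} (hδ : δ ∈ R.pos) (hγ : γ ∈ R.simple)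
    (hneg : ⟪δ, γ⟫ < 0) : δ + γ ∈ R.pos := by
  refine ⟨R.add_mem_roots_of_inner_neg_s13 hδ.1 (R.simple_sub hγ) (fun h0 => ?_) hneg,
    add_mem hδ.2 (AddSubmonoid.subset_closure hγ)⟩
  have h := congrArg (R.coord γ) h0
  rw [map_add, coord_self hγ, map_zero] at h
  linarith [coord_nonneg γ hδ.2]

theorem exists_add_simple_mem_of_not_le {θ α δ : E} (hθ : R.IsHighest θ)
    (hα : α ∈ R.simple) (hθα : R.coord α θ = 1) {J : Set E} (hJ : R.IsAbelianIdeal J)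
    (hIJ : {β ∈ R.pos | R.le α β} ⊆ J) (hδJ : δ ∈ J) (hδα : ¬ R.le α δ) :
    ∃ γ ∈ R.simple, δ + γ ∈ J ∧ ¬ R.le α (δ + γ) := by
  obtain ⟨hJpos, hJup, hJab⟩ := hJ
  have hδ := hJpos hδJ
  have hδ0 := coord_eq_zero_of_not_le hθ hα hθα hδ hδα
  by_cases hdom : ∀ γ ∈ R.simple, 0 ≤ ⟪δ, γ⟫
  · have hne : θ ≠ δ := by
      rintro rfl
      simp [hθα] at hδ0
    have hθδ : θ - δ ∈ R.pos := ⟨R.sub_mem_roots_of_dominant hθ hδ.1 hdom hne, hθ.2 δ hδ.1⟩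
    have hαθδ : R.le α (θ - δ) :=
      (le_iff_coord_eq_one hθ hα hθα hθδ).2 (by rw [map_sub, hθα, hδ0, sub_zero])
    exact (hJab δ hδJ _ (hIJ ⟨hθδ, hαθδ⟩) (by rw [add_sub_cancel]; exact hθ.1.1)).elim
  push Not at hdom
  obtain ⟨γ, hγ, hneg⟩ := hdom
  have hδγ := R.add_mem_pos_of_inner_neg hδ hγ hneg
  by_cases hγα : γ = α
  · subst hγα
    have hγI : γ ∈ {β ∈ R.pos | R.le γ β} :=
      ⟨⟨R.simple_sub hγ, AddSubmonoid.subset_closure hγ⟩, by simp [le]⟩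
    exact (hJab δ hδJ γ (hIJ hγI) hδγ.1).elim
  refine ⟨γ, hγ, hJup δ hδJ _ hδγ (by simpa [le] using AddSubmonoid.subset_closure hγ), ?_⟩
  rw [le_iff_coord_eq_one hθ hα hθα hδγ, map_add, hδ0, coord_of_ne hγ hγα]
  norm_num

theorem subset_setOf_le_of_isAbelianIdeal {θ α : E} (hθ : R.IsHighest θ) (hα : α ∈ R.simple)
    (hθα : R.coord α θ = 1) {J : Set E} (hJ : R.IsAbelianIdeal J)
    (hIJ : {β ∈ R.pos | R.le α β} ⊆ J) : J ⊆ {β ∈ R.pos | R.le α β} := by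
  intro δ₀ hδ₀J
  refine ⟨hJ.1 hδ₀J, ?_⟩
  by_contra hδ₀
  obtain ⟨height, hheight⟩ := Module.exists_dual_forall_apply_eq_one R.simple_linearIndepOn
  have hfin : {δ ∈ J | ¬ R.le α δ}.Finite := R.finite.subset fun δ hδ => (hJ.1 hδ.1).1
  obtain ⟨δ, ⟨hδJ, hδα⟩, hδmax⟩ := hfin.exists_maximalFor height _ ⟨δ₀, hδ₀J, hδ₀⟩
  obtain ⟨γ, hγ, hδγ⟩ := exists_add_simple_mem_of_not_le hθ hα hθα hJ hIJ hδJ hδα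
  have hγ1 : height γ = 1 := hheight γ hγ
  have hmax := hδmax hδγ (by rw [map_add, hγ1]; linarith)
  rw [map_add, hγ1] at hmax
  linarith

end BasedRS

theorem statement13_general {E : Type} [NormedAddCommGroup E] [InnerProductSpace ℝ E] (R : BasedRS E)
    (θ : E) (hθ : R.IsHighest θ)
    (α : E) (hα : α ∈ R.simple) (hm : R.coeffOne α θ) :
    R.IsAbelianIdeal {β ∈ R.pos | R.le α β} ∧
    (∀ J : Set E, R.IsAbelianIdeal J → {β ∈ R.pos | R.le α β} ⊆ J →
      J = {β ∈ R.pos | R.le α β}) ∧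
    {β ∈ R.pos | R.le α β} = {β ∈ R.pos | R.coeffOne α β} := by
  have hθα : R.coord α θ = 1 := (BasedRS.coeffOne_iff hα hθ.1.2).1 hm
  refine ⟨BasedRS.isAbelianIdeal_setOf_le hθ hα hθα, fun J hJ hIJ =>
    (BasedRS.subset_setOf_le_of_isAbelianIdeal hθ hα hθα hJ hIJ).antisymm hIJ, ?_⟩
  ext β
  refine and_congr_right fun hβ => ?_
  rw [BasedRS.le_iff_coord_eq_one hθ hα hθα hβ, BasedRS.coeffOne_iff hα hβ.2]

theorem statement13 {E : Type} [NormedAddCommGroup E] [InnerProductSpace ℝ E] (R : BasedRS E) (hirr : R.toCrystRS.Irred)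
    (θ : E) (hθ : R.IsHighest θ)
    (α : E) (hα : α ∈ R.simple) (hm : R.coeffOne α θ) :
    R.IsAbelianIdeal {β ∈ R.pos | R.le α β} ∧
    (∀ J : Set E, R.IsAbelianIdeal J → {β ∈ R.pos | R.le α β} ⊆ J →
      J = {β ∈ R.pos | R.le α β}) ∧
    {β ∈ R.pos | R.le α β} = {β ∈ R.pos | R.coeffOne α β} :=
  statement13_general R θ hθ α hα hm
end
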